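/- Let A be a tree-bonded assembly with fixed configuration A₀, let τ be a positive integer, let v ∈ ℤ², and let S be a set of at least two binding sites between A₀ and A₀ + v whose strengths sum to at least τ. Let T₁ be the spanned subtree in the bond graph of A₀ of the first endpoints of the binding sites in S and T₂ the spanned subtree in the bond graph of A₀ + v of the second endpoints, and suppose the position sets of T₁ and T₂ are disjoint. Then the configuration C̃ obtained as the union of the restriction of A₀ to the positions of T₁ and the restriction of A₀ + v to the positions of T₂ has a connected bond graph, the edge cut of the bond graph of C̃ separating the positions of T₁ from the positions of T₂ has total weight at least τ, and the assembly of C̃ is not a subassembly of A. -/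

import Mathlib

namespace TwoHAM

/-- A tile: a non-rotating unit square with a glue on each of its four sides. -/
structure Tile (Glue : Type) where
  north : Glue
  south : Glue
  east : Glue
  west : Glue

variable {Glue : Type}

/-- The strength of the abutting glues of tile `t₁` placed at position `p` and tile `t₂`
placed at position `q`; zero if `p` and `q` are not adjacent. -/
def bondStrength (str : Glue → Glue → ℕ) (t₁ t₂ : Tile Glue) (p q : ℤ × ℤ) : ℕ :=
  if q = (p.1 + 1, p.2) then str t₁.east t₂.west
  else if q = (p.1 - 1, p.2) then str t₁.west t₂.east
  else if q = (p.1, p.2 + 1) then str t₁.north t₂.south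
  else if q = (p.1, p.2 - 1) then str t₁.south t₂.north
  else 0

/-- A configuration: a partial function from `ℤ²` to tiles with finite nonempty domain. -/
structure Config (Glue : Type) where
  tiles : ℤ × ℤ → Option (Tile Glue)
  finite : {p : ℤ × ℤ | tiles p ≠ none}.Finite
  nonempty : {p : ℤ × ℤ | tiles p ≠ none}.Nonempty

namespace Config

/-- The domain of a configuration. -/
def dom (C : Config Glue) : Set (ℤ × ℤ) := {p : ℤ × ℤ | C.tiles p ≠ none}

end Config

/-- The glue strength contributed between position `p` of configuration `C₁` and
position `q` of configuration `C₂`. -/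
def crossBond (str : Glue → Glue → ℕ) (C₁ C₂ : Config Glue) (p q : ℤ × ℤ) : ℕ :=
  match C₁.tiles p, C₂.tiles q with
  | some t₁, some t₂ => bondStrength str t₁ t₂ p q
  | _, _ => 0

/-- `(p, q)` is a binding site between configurations `C₁` and `C₂` if the abutting glues
of the tiles of `C₁` at `p` and of `C₂` at `q` have positive strength. -/
def IsBindingSite (str : Glue → Glue → ℕ) (C₁ C₂ : Config Glue) (p q : ℤ × ℤ) : Prop :=
  0 < crossBond str C₁ C₂ p q

namespace Config

/-- The glue strength between positions `p` and `q` within a configuration. -/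
def bond (str : Glue → Glue → ℕ) (C : Config Glue) (p q : ℤ × ℤ) : ℕ :=
  crossBond str C C p q

/-- The bond graph of a configuration: adjacent positions with positive abutting glue
strength are joined by an edge. -/
def bondGraph (str : Glue → Glue → ℕ) (C : Config Glue) : SimpleGraph (ℤ × ℤ) where
  Adj p q := p ≠ q ∧ (0 < C.bond str p q ∨ 0 < C.bond str q p)
  symm := by
    constructor
    rintro p q ⟨h1, h2⟩
    exact ⟨h1.symm, h2.symm⟩
  loopless := by
    constructor
    rintro p ⟨h1, _⟩
    exact h1 rfl

/-- The bond graph of a configuration is connected (all positions of the domain are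
mutually reachable). -/
def Connected (str : Glue → Glue → ℕ) (C : Config Glue) : Prop :=
  ∀ p ∈ C.dom, ∀ q ∈ C.dom, (C.bondGraph str).Reachable p q

/-- The domain of a configuration as a finset. -/
noncomputable def domFinset (C : Config Glue) : Finset (ℤ × ℤ) := C.finite.toFinset

/-- The total weight of the edge cut of the bond graph determined by a set `S`. -/
noncomputable def cutWeight (str : Glue → Glue → ℕ) (C : Config Glue)
    (S : Finset (ℤ × ℤ)) : ℕ :=
  ∑ p ∈ S, ∑ q ∈ C.domFinset \ S, C.bond str p q

/-- A configuration is `τ`-stable if its bond graph is connected and every edge cut has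
total weight at least `τ`. -/
def IsStable (str : Glue → Glue → ℕ) (τ : ℕ) (C : Config Glue) : Prop :=
  C.Connected str ∧
    ∀ S : Finset (ℤ × ℤ), S ⊆ C.domFinset → S.Nonempty → (C.domFinset \ S).Nonempty →
      τ ≤ C.cutWeight str S

/-- The translation of a configuration by a vector `v`. -/
def translate (C : Config Glue) (v : ℤ × ℤ) : Config Glue where
  tiles p := C.tiles (p - v)
  finite := by
    have h : {p : ℤ × ℤ | C.tiles (p - v) ≠ none} =
        (fun q : ℤ × ℤ => q + v) '' {p : ℤ × ℤ | C.tiles p ≠ none} := by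
      ext p
      constructor
      · intro hp
        exact ⟨p - v, hp, sub_add_cancel p v⟩
      · rintro ⟨q, hq, rfl⟩
        simpa using hq
    rw [h]
    exact C.finite.image _
  nonempty := by
    obtain ⟨p, hp⟩ := C.nonempty
    exact ⟨p + v, by simpa using hp⟩

/-- `C₁` is a restriction of `C₂`. -/
def Subconfig (C₁ C₂ : Config Glue) : Prop :=
  ∀ p : ℤ × ℤ, C₁.tiles p ≠ none → C₁.tiles p = C₂.tiles p

/-- A configuration is tree-bonded if its bond graph is a tree (connected and acyclic). -/
def IsTreeBonded (str : Glue → Glue → ℕ) (C : Config Glue) : Prop :=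
  C.Connected str ∧ (C.bondGraph str).IsAcyclic

end Config

/-- The assembly of a configuration: the set of all of its translations. -/
def asmOf (C : Config Glue) : Set (Config Glue) := {C' | ∃ v : ℤ × ℤ, C' = C.translate v}

/-- A set of configurations is an assembly if it is the set of all translations of some
configuration. -/
def IsAssembly (A : Set (Config Glue)) : Prop := ∃ C : Config Glue, A = asmOf C

/-- An assembly is `τ`-stable if its configurations are. -/
def IsStableAssembly (str : Glue → Glue → ℕ) (τ : ℕ) (A : Set (Config Glue)) : Prop :=
  ∀ C ∈ A, C.IsStable str τ

/-- An assembly is tree-bonded if the bond graph of its configurations is a tree. -/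
def IsTreeBondedAssembly (str : Glue → Glue → ℕ) (A : Set (Config Glue)) : Prop :=
  ∀ C ∈ A, C.IsTreeBonded str

/-- `A ⊑ B`: some configuration of `A` is a restriction of some configuration of `B`. -/
def Subassembly (A B : Set (Config Glue)) : Prop :=
  ∃ C₁ ∈ A, ∃ C₂ ∈ B, Config.Subconfig C₁ C₂

/-- Union of two partial tile maps (preferring the first). -/
def optOr {α : Type} (a b : Option α) : Option α :=
  match a with
  | some x => some x
  | none => b

/-- Assemblies `A` and `B` are `τ`-combinable into `C`. -/
def Combinable (str : Glue → Glue → ℕ) (τ : ℕ) (A B C : Set (Config Glue)) : Prop :=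
  ∃ CA ∈ A, ∃ CB ∈ B, ∃ CC ∈ C,
    (∀ p : ℤ × ℤ, CC.tiles p = optOr (CA.tiles p) (CB.tiles p)) ∧
    CA.dom ∩ CB.dom = ∅ ∧
    CC.IsStable str τ

/-- The configuration consisting of a single tile `t` at the origin. -/
def singletonConfig (t : Tile Glue) : Config Glue where
  tiles p := if p = ((0 : ℤ), (0 : ℤ)) then some t else none
  finite := by
    apply Set.Finite.subset (Set.finite_singleton ((0 : ℤ), (0 : ℤ)))
    intro p hp
    by_cases h : p = ((0 : ℤ), (0 : ℤ)) <;> simp_all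
  nonempty := ⟨((0 : ℤ), (0 : ℤ)), by simp⟩

/-- The producible assemblies of the 2HAM system `Γ = (T, τ)`. -/
inductive Producible (str : Glue → Glue → ℕ) (T : Set (Tile Glue)) (τ : ℕ) :
    Set (Config Glue) → Prop
  | single (t : Tile Glue) (ht : t ∈ T) : Producible str T τ (asmOf (singletonConfig t))
  | combine {A B C : Set (Config Glue)} : Producible str T τ A → Producible str T τ B →
      Combinable str τ A B C → Producible str T τ C

/-- A producible assembly is terminal if it is not `τ`-combinable with any producible
assembly. -/
def Terminal (str : Glue → Glue → ℕ) (T : Set (Tile Glue)) (τ : ℕ)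
    (A : Set (Config Glue)) : Prop :=
  Producible str T τ A ∧
    ∀ B C : Set (Config Glue), Producible str T τ B → ¬ Combinable str τ A B C

/-- `Γ = (T, τ)` uniquely produces `A`. -/
def UniquelyProduces (str : Glue → Glue → ℕ) (T : Set (Tile Glue)) (τ : ℕ)
    (A : Set (Config Glue)) : Prop :=
  (∀ X : Set (Config Glue), Terminal str T τ X ↔ X = A) ∧
    ∀ B : Set (Config Glue), Producible str T τ B → Subassembly B A

/-- The modified strength function of the noncooperative (temperature 1) system:
strength `1` exactly for glue pairs of strength at least `τ`. -/
def capStr (str : Glue → Glue → ℕ) (τ : ℕ) : Glue → Glue → ℕ :=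
  fun g g' => if τ ≤ str g g' then 1 else 0

/-- A `τ`-combination that uses cooperative binding: every binding site between the two
combined configurations has strength strictly less than `τ`. -/
def CombinableCoop (str : Glue → Glue → ℕ) (τ : ℕ) (A B C : Set (Config Glue)) : Prop :=
  ∃ CA ∈ A, ∃ CB ∈ B, ∃ CC ∈ C,
    (∀ p : ℤ × ℤ, CC.tiles p = optOr (CA.tiles p) (CB.tiles p)) ∧
    CA.dom ∩ CB.dom = ∅ ∧
    CC.IsStable str τ ∧
    ∀ p q : ℤ × ℤ, crossBond str CA CB p q < τ

end TwoHAM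

namespace TwoHAM

/-- The set of positions of the spanned subtree of a set `pts` of vertices in an acyclic
graph `G`: the positions lying on the (unique) path between some pair of points of
`pts`. -/
def spannedSet (G : SimpleGraph (ℤ × ℤ)) (pts : Set (ℤ × ℤ)) : Set (ℤ × ℤ) :=
  {x : ℤ × ℤ | ∃ a ∈ pts, ∃ b ∈ pts, ∃ W : G.Walk a b, W.IsPath ∧ x ∈ W.support}

/-- The total weight of the edge cut of the bond graph of `C` separating the positions in
`S` from the rest of the domain. -/
noncomputable def Config.cutWeightSet {Glue : Type} (str : Glue → Glue → ℕ)
    (C : Config Glue) (S : Set (ℤ × ℤ)) : ℕ := by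
  classical
  exact ∑ p ∈ C.domFinset, ∑ q ∈ C.domFinset,
    if p ∈ S ∧ q ∉ S then C.bond str p q else 0

end TwoHAM

/-
Inside a spanned subtree any two positions are joined by a walk that stays in the subtree, and
`C'` carries the tiles of `A₀` on `pos₁` and those of `A₀ + v` on `pos₂`, so these walks are walks
of the bond graph of `C'`. One binding site joins the two trees, which makes `C'` connected, and
every binding site crosses the cut between `pos₁` and `pos₂`, which gives its weight. Two distinct
binding sites together with the two trees close a cycle in the bond graph of `C'`, whereas every
subassembly of a tree-bonded assembly has an acyclic bond graph.
-/

namespace SimpleGraph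

variable {V : Type*} {G H : SimpleGraph V} {s t : Set V}

def PreconnectedOn (G : SimpleGraph V) (s : Set V) : Prop :=
  ∀ x ∈ s, ∀ y ∈ s, ∃ W : G.Walk x y, ∀ z ∈ W.support, z ∈ s

lemma PreconnectedOn.mono_of_adj (h : G.PreconnectedOn s)
    (hGH : ∀ u ∈ s, ∀ w ∈ s, G.Adj u w → H.Adj u w) : H.PreconnectedOn s := by
  intro x hx y hy
  obtain ⟨W, hW⟩ := h x hx y hy
  refine ⟨W.transfer H fun e he => ?_, by rwa [Walk.support_transfer]⟩
  induction e using Sym2.ind with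
  | h u w =>
    exact hGH u (hW u (W.fst_mem_support_of_mem_edges he)) w
      (hW w (W.snd_mem_support_of_mem_edges he)) (W.adj_of_mem_edges he)

lemma PreconnectedOn.reachable_of_mem_union (hs : G.PreconnectedOn s) (ht : G.PreconnectedOn t)
    {a b : V} (ha : a ∈ s) (hb : b ∈ t) (hab : G.Adj a b) :
    ∀ x ∈ s ∪ t, ∀ y ∈ s ∪ t, G.Reachable x y := by
  have to_a : ∀ x ∈ s ∪ t, G.Reachable x a := by
    rintro x (hx | hx)
    · exact ⟨(hs x hx a ha).choose⟩
    · exact ⟨(ht x hx b hb).choose.append (Walk.cons hab.symm Walk.nil)⟩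
  exact fun x hx y hy => (to_a x hx).trans (to_a y hy).symm

lemma not_isAcyclic_of_two_crossing_edges (hst : Disjoint s t) (hs : G.PreconnectedOn s)
    (ht : G.PreconnectedOn t) {a₁ a₂ b₁ b₂ : V} (ha₁ : a₁ ∈ s) (ha₂ : a₂ ∈ s) (hb₁ : b₁ ∈ t)
    (hb₂ : b₂ ∈ t) (h₁ : G.Adj a₁ b₁) (h₂ : G.Adj a₂ b₂) (hne : (a₁, b₁) ≠ (a₂, b₂)) :
    ¬ G.IsAcyclic := by
  intro hG
  -- the walk `a₁ ⇝ a₂ — b₂ ⇝ b₁` through `s` and `t` avoids `a₁b₁`, so `a₁b₁` is no bridge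
  obtain ⟨W₁, hW₁⟩ := hs a₁ ha₁ a₂ ha₂
  obtain ⟨W₂, hW₂⟩ := ht b₂ hb₂ b₁ hb₁
  have hbridge := isBridge_iff_forall_walk_mem_edges.mp (isAcyclic_iff_forall_adj_isBridge.mp hG h₁)
    (W₁.append (Walk.cons h₂ W₂))
  rw [Walk.edges_append, Walk.edges_cons, List.mem_append, List.mem_cons] at hbridge
  rcases hbridge with he | he | he
  · exact hst.notMem_of_mem_right hb₁ (hW₁ b₁ (W₁.snd_mem_support_of_mem_edges he))
  · rcases Sym2.eq_iff.mp he with ⟨rfl, rfl⟩ | ⟨rfl, -⟩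
    · exact hne rfl
    · exact hst.notMem_of_mem_right hb₂ ha₁
  · exact hst.notMem_of_mem_left ha₁ (hW₂ a₁ (W₂.fst_mem_support_of_mem_edges he))

end SimpleGraph

namespace TwoHAM

open SimpleGraph

variable {Glue : Type} {str : Glue → Glue → ℕ}

lemma spannedSet_preconnectedOn {G : SimpleGraph (ℤ × ℤ)} {pts : Set (ℤ × ℤ)}
    (hpts : ∀ a ∈ pts, ∀ b ∈ pts, G.Reachable a b) : G.PreconnectedOn (spannedSet G pts) := by
  classical
  rintro x ⟨a, ha, b, hb, Wab, hWab, hxs⟩ y ⟨c, hc, d, hd, Wcd, hWcd, hys⟩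
  obtain ⟨Wac, hWac⟩ := (hpts a ha c hc).exists_isPath
  refine ⟨(Wab.takeUntil x hxs).reverse.append (Wac.append (Wcd.takeUntil y hys)), ?_⟩
  intro z hz
  simp only [Walk.mem_support_append_iff, Walk.support_reverse, List.mem_reverse] at hz
  rcases hz with hz | hz | hz
  · exact ⟨a, ha, b, hb, Wab, hWab, Walk.support_takeUntil_subset_support _ _ hz⟩
  · exact ⟨a, ha, c, hc, Wac, hWac, hz⟩
  · exact ⟨c, hc, d, hd, Wcd, hWcd, Walk.support_takeUntil_subset_support _ _ hz⟩

lemma subset_spannedSet {G : SimpleGraph (ℤ × ℤ)} {pts : Set (ℤ × ℤ)} :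
    pts ⊆ spannedSet G pts :=
  fun a ha => ⟨a, ha, a, ha, Walk.nil, Walk.IsPath.nil, Walk.start_mem_support _⟩

lemma mem_dom_of_crossBond_pos {C₁ C₂ : Config Glue} {p q : ℤ × ℤ}
    (h : 0 < crossBond str C₁ C₂ p q) : p ∈ C₁.dom ∧ q ∈ C₂.dom := by
  simp only [Config.dom, Set.mem_ofPred_eq]
  cases h₁ : C₁.tiles p <;> cases h₂ : C₂.tiles q <;> simp_all [crossBond]

lemma crossBond_congr {C₁ C₂ D₁ D₂ : Config Glue} {p q : ℤ × ℤ}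
    (h₁ : C₁.tiles p = D₁.tiles p) (h₂ : C₂.tiles q = D₂.tiles q) :
    crossBond str C₁ C₂ p q = crossBond str D₁ D₂ p q := by
  rw [crossBond, crossBond, h₁, h₂]

lemma bondStrength_add_add (t₁ t₂ : Tile Glue) (p q d : ℤ × ℤ) :
    bondStrength str t₁ t₂ (p + d) (q + d) = bondStrength str t₁ t₂ p q := by
  simp only [bondStrength, Prod.ext_iff, Prod.fst_add, Prod.snd_add, add_right_comm _ d.1 1,
    add_right_comm _ d.2 1, add_sub_right_comm _ d.1 1, add_sub_right_comm _ d.2 1, add_left_inj]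

namespace Config

lemma ext_tiles {C D : Config Glue} (h : C.tiles = D.tiles) : C = D := by
  cases C; cases D; cases h; rfl

lemma mem_asmOf_self (C : Config Glue) : C ∈ asmOf C :=
  ⟨0, ext_tiles (funext fun p => by simp [translate])⟩

lemma bondGraph_adj_congr {C D : Config Glue} {p q : ℤ × ℤ} (hp : C.tiles p = D.tiles p)
    (hq : C.tiles q = D.tiles q) : (C.bondGraph str).Adj p q ↔ (D.bondGraph str).Adj p q := by
  simp only [bondGraph, bond, crossBond_congr hp hq, crossBond_congr hq hp]

lemma mem_dom_of_adj {C : Config Glue} {p q : ℤ × ℤ} (h : (C.bondGraph str).Adj p q) :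
    p ∈ C.dom := by
  rcases h with ⟨-, h | h⟩
  · exact (mem_dom_of_crossBond_pos h).1
  · exact (mem_dom_of_crossBond_pos h).2

lemma Subconfig.bondGraph_le {C D : Config Glue} (h : C.Subconfig D) :
    C.bondGraph str ≤ D.bondGraph str := fun p q hpq =>
  (bondGraph_adj_congr (h p (mem_dom_of_adj hpq)) (h q (mem_dom_of_adj hpq.symm))).mp hpq

lemma bond_translate (C : Config Glue) (v p q : ℤ × ℤ) :
    (C.translate v).bond str (p + v) (q + v) = C.bond str p q := by
  simp only [bond, crossBond, translate, add_sub_cancel_right]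
  cases C.tiles p <;> cases C.tiles q <;> simp only [bondStrength_add_add]

lemma isAcyclic_bondGraph_translate_iff (C : Config Glue) (v : ℤ × ℤ) :
    ((C.translate v).bondGraph str).IsAcyclic ↔ (C.bondGraph str).IsAcyclic :=
  Iso.isAcyclic_iff (G := C.bondGraph str)
    { toEquiv := Equiv.addRight v
      map_rel_iff' := by
        intro p q
        simp only [bondGraph, Equiv.coe_addRight, bond_translate, ne_eq, add_left_inj] } |>.symm

lemma sum_bond_le_cutWeightSet (C : Config Glue) {s : Set (ℤ × ℤ)}
    {S : Finset ((ℤ × ℤ) × (ℤ × ℤ))} (hS : ∀ b ∈ S, b.1 ∈ s ∧ b.2 ∉ s) :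
    ∑ b ∈ S, C.bond str b.1 b.2 ≤ C.cutWeightSet str s := by
  classical
  rw [cutWeightSet, ← Finset.sum_product']
  calc ∑ b ∈ S, C.bond str b.1 b.2
      = ∑ b ∈ S, if b.1 ∈ s ∧ b.2 ∉ s then C.bond str b.1 b.2 else 0 :=
        Finset.sum_congr rfl fun b hb => (if_pos (hS b hb)).symm
    _ ≤ _ := by
        refine Finset.sum_le_sum_of_ne_zero fun b _ hb => ?_
        have hpos : 0 < C.bond str b.1 b.2 := Nat.pos_of_ne_zero fun h => hb (by simp [h])
        simp only [Finset.mem_product, domFinset, Set.Finite.mem_toFinset]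
        exact mem_dom_of_crossBond_pos hpos

lemma preconnectedOn_spannedSet {C D : Config Glue} (hD : D.Connected str)
    {pts : Set (ℤ × ℤ)} (hpts : pts ⊆ D.dom)
    (hCD : ∀ p ∈ spannedSet (D.bondGraph str) pts, C.tiles p = D.tiles p) :
    (C.bondGraph str).PreconnectedOn (spannedSet (D.bondGraph str) pts) :=
  (spannedSet_preconnectedOn fun a ha b hb => hD a (hpts ha) b (hpts hb)).mono_of_adj
    fun u hu w hw => (bondGraph_adj_congr (hCD u hu) (hCD w hw)).mpr

end Config

lemma not_subassembly_of_not_isAcyclic {A : Set (Config Glue)} (hA : IsTreeBondedAssembly str A)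
    {C : Config Glue} (hC : ¬ (C.bondGraph str).IsAcyclic) : ¬ Subassembly (asmOf C) A := by
  rintro ⟨_, ⟨u, rfl⟩, D, hD, hsub⟩
  exact hC ((C.isAcyclic_bondGraph_translate_iff u).mp ((hA D hD).2.anti hsub.bondGraph_le))

theorem spanned_subtrees_give_rogue_general {Glue : Type}
    (str : Glue → Glue → ℕ)
    (τ : ℕ)
    (A : Set (Config Glue)) (A₀ : Config Glue)
    (hA : A = asmOf A₀) (htree : IsTreeBondedAssembly str A)
    (v : ℤ × ℤ) (S : Finset ((ℤ × ℤ) × (ℤ × ℤ)))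
    (hcard : 2 ≤ S.card)
    (hsites : ∀ b ∈ S, IsBindingSite str A₀ (A₀.translate v) b.1 b.2)
    (hstr : τ ≤ ∑ b ∈ S, crossBond str A₀ (A₀.translate v) b.1 b.2)
    (pos₁ pos₂ : Set (ℤ × ℤ))
    (hpos₁ : pos₁ = spannedSet (A₀.bondGraph str) ↑(S.image Prod.fst))
    (hpos₂ : pos₂ = spannedSet ((A₀.translate v).bondGraph str) ↑(S.image Prod.snd))
    (hdisj : Disjoint pos₁ pos₂)
    (C' : Config Glue)
    (hC'₁ : ∀ p ∈ pos₁, C'.tiles p = A₀.tiles p)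
    (hC'₂ : ∀ p ∈ pos₂, C'.tiles p = (A₀.translate v).tiles p)
    (hC'₃ : ∀ p : ℤ × ℤ, p ∉ pos₁ → p ∉ pos₂ → C'.tiles p = none) :
    C'.Connected str ∧
      τ ≤ C'.cutWeightSet str pos₁ ∧
      ¬ Subassembly (asmOf C') A := by
  have hdom₁ : ↑(S.image Prod.fst) ⊆ A₀.dom := by
    rw [Finset.coe_image, Set.image_subset_iff]
    exact fun b hb => (mem_dom_of_crossBond_pos (hsites b hb)).1
  have hdom₂ : ↑(S.image Prod.snd) ⊆ (A₀.translate v).dom := by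
    rw [Finset.coe_image, Set.image_subset_iff]
    exact fun b hb => (mem_dom_of_crossBond_pos (hsites b hb)).2
  have hS₁ : ∀ b ∈ S, b.1 ∈ pos₁ := fun b hb => hpos₁ ▸ subset_spannedSet (S.mem_image_of_mem _ hb)
  have hS₂ : ∀ b ∈ S, b.2 ∈ pos₂ := fun b hb => hpos₂ ▸ subset_spannedSet (S.mem_image_of_mem _ hb)
  have hT₁ : (C'.bondGraph str).PreconnectedOn pos₁ := hpos₁ ▸
    Config.preconnectedOn_spannedSet (htree A₀ (hA ▸ A₀.mem_asmOf_self)).1 hdom₁ (hpos₁ ▸ hC'₁)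
  have hT₂ : (C'.bondGraph str).PreconnectedOn pos₂ := hpos₂ ▸
    Config.preconnectedOn_spannedSet (htree _ (hA ▸ ⟨v, rfl⟩)).1 hdom₂ (hpos₂ ▸ hC'₂)
  have hbond : ∀ b ∈ S, C'.bond str b.1 b.2 = crossBond str A₀ (A₀.translate v) b.1 b.2 :=
    fun b hb => crossBond_congr (hC'₁ _ (hS₁ b hb)) (hC'₂ _ (hS₂ b hb))
  have hcross : ∀ b ∈ S, (C'.bondGraph str).Adj b.1 b.2 := fun b hb =>
    ⟨hdisj.ne_of_mem (hS₁ b hb) (hS₂ b hb), .inl (hbond b hb ▸ hsites b hb)⟩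
  have hC'dom : C'.dom ⊆ pos₁ ∪ pos₂ := fun p hp =>
    by_contra fun h => hp (hC'₃ p (fun h₁ => h (.inl h₁)) (fun h₂ => h (.inr h₂)))
  obtain ⟨b₁, hb₁, b₂, hb₂, hne⟩ := Finset.one_lt_card.mp hcard
  refine ⟨fun p hp q hq => ?_, ?_, not_subassembly_of_not_isAcyclic htree ?_⟩
  · exact hT₁.reachable_of_mem_union hT₂ (hS₁ b₁ hb₁) (hS₂ b₁ hb₁) (hcross b₁ hb₁)
      p (hC'dom hp) q (hC'dom hq)
  · calc τ ≤ ∑ b ∈ S, crossBond str A₀ (A₀.translate v) b.1 b.2 := hstr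
      _ = ∑ b ∈ S, C'.bond str b.1 b.2 := (Finset.sum_congr rfl hbond).symm
      _ ≤ C'.cutWeightSet str pos₁ := C'.sum_bond_le_cutWeightSet fun b hb =>
          ⟨hS₁ b hb, hdisj.notMem_of_mem_right (hS₂ b hb)⟩
  · exact not_isAcyclic_of_two_crossing_edges hdisj hT₁ hT₂ (hS₁ b₁ hb₁) (hS₁ b₂ hb₂)
      (hS₂ b₁ hb₁) (hS₂ b₂ hb₂) (hcross b₁ hb₁) (hcross b₂ hb₂) hne

/-- Let `A` be a tree-bonded assembly with fixed configuration `A₀`, and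
let `S` be a set of at least two binding sites between `A₀` and `A₀ + v` whose strengths
sum to at least `τ`. If the position sets of the spanned subtree `T₁` (in the bond graph
of `A₀`) of the first endpoints of `S` and of the spanned subtree `T₂` (in the bond graph
of `A₀ + v`) of the second endpoints of `S` are disjoint, then the configuration `C'`
obtained as the union of the restriction of `A₀` to the positions of `T₁` and the
restriction of `A₀ + v` to the positions of `T₂` has a connected bond graph, the edge cut
of the bond graph of `C'` separating the positions of `T₁` from those of `T₂` has total
weight at least `τ`, and the assembly of `C'` is not a subassembly of `A`. -/
theorem spanned_subtrees_give_rogue {Glue : Type} [Fintype Glue]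
    (str : Glue → Glue → ℕ) (hsym : ∀ g g' : Glue, str g g' = str g' g)
    (τ : ℕ) (hτ : 0 < τ)
    (A : Set (Config Glue)) (A₀ : Config Glue)
    (hA : A = asmOf A₀) (htree : IsTreeBondedAssembly str A)
    (v : ℤ × ℤ) (S : Finset ((ℤ × ℤ) × (ℤ × ℤ)))
    (hcard : 2 ≤ S.card)
    (hsites : ∀ b ∈ S, IsBindingSite str A₀ (A₀.translate v) b.1 b.2)
    (hstr : τ ≤ ∑ b ∈ S, crossBond str A₀ (A₀.translate v) b.1 b.2)
    (pos₁ pos₂ : Set (ℤ × ℤ))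
    (hpos₁ : pos₁ = spannedSet (A₀.bondGraph str) ↑(S.image Prod.fst))
    (hpos₂ : pos₂ = spannedSet ((A₀.translate v).bondGraph str) ↑(S.image Prod.snd))
    (hdisj : Disjoint pos₁ pos₂)
    (C' : Config Glue)
    (hC'₁ : ∀ p ∈ pos₁, C'.tiles p = A₀.tiles p)
    (hC'₂ : ∀ p ∈ pos₂, C'.tiles p = (A₀.translate v).tiles p)
    (hC'₃ : ∀ p : ℤ × ℤ, p ∉ pos₁ → p ∉ pos₂ → C'.tiles p = none) :
    C'.Connected str ∧
      τ ≤ C'.cutWeightSet str pos₁ ∧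
      ¬ Subassembly (asmOf C') A :=
  spanned_subtrees_give_rogue_general str τ A A₀ hA htree v S hcard hsites hstr pos₁ pos₂ hpos₁
    hpos₂ hdisj C' hC'₁ hC'₂ hC'₃

end TwoHAM
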